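/- If for each bounded Borel function f : S → ℝ the sequence α_n(f) converges in probability, then E[ f(X_{n+2}) − f(X_{n+1}) | 𝓕_n ] → 0 in probability for each bounded Borel function f. -/

import Mathlib

/-! Write `g n = α_n(f)`. The `g n` are bounded by `sup |f|` and converge in probability, hence
in `L¹` (Vitali), so `‖g (n + 1) - g n‖₁ → 0`. By the tower property
`E[f(X_{n+2}) - f(X_{n+1}) | 𝓕_n] = E[g (n + 1) - g n | 𝓕_n]`, and conditional expectation is an
`L¹` contraction; so these conditional expectations tend to `0` in `L¹`, hence in probability. -/

open MeasureTheory ProbabilityTheory Filter Topology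
open scoped ENNReal NNReal

variable {Ω S : Type*}

/-- `Filt X n` is the σ-field `𝓕_n = σ(X_1,…,X_n)` generated by the first `n` variables.
Indexing convention: `X i` here denotes the paper's `X_{i+1}`, so that `Filt X 0 = ⊥`. -/
def Filt [MeasurableSpace S] (X : ℕ → Ω → S) (n : ℕ) : MeasurableSpace Ω :=
  ⨆ i ∈ Finset.range n, MeasurableSpace.comap (X i) inferInstance

/-- The predictive mean `α_n(f) = E[f(X_{n+1}) ∣ 𝓕_n]` (here the paper's `X_{n+1}` is `X n`). -/
noncomputable def predMean [MeasurableSpace Ω] [MeasurableSpace S]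
    (P : Measure Ω) (X : ℕ → Ω → S) (f : S → ℝ) (n : ℕ) : Ω → ℝ :=
  P[(fun ω => f (X n ω)) | Filt X n]

section LpConvergence

variable {α ι E : Type*} {m₀ : MeasurableSpace α} {μ : Measure α} [NormedAddCommGroup E]
  {p : ℝ≥0∞}

theorem unifIntegrable_of_ae_norm_le (hp : 1 ≤ p) (hp' : p ≠ ∞) {f : ι → α → E} {C : ℝ}
    (hf : ∀ i, AEStronglyMeasurable (f i) μ) (hfC : ∀ i, ∀ᵐ x ∂μ, ‖f i x‖ ≤ C) :
    UnifIntegrable f p μ := by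
  refine unifIntegrable_of hp hp' hf fun _ _ => ⟨C.toNNReal + 1, fun i => ?_⟩
  have hzero : {x | C.toNNReal + 1 ≤ ‖f i x‖₊}.indicator (f i) =ᵐ[μ] 0 := by
    filter_upwards [hfC i] with x hx
    refine Set.indicator_of_notMem (fun hle => ?_) _
    have : C.toNNReal + 1 ≤ ‖f i x‖ := by exact_mod_cast hle
    linarith [Real.le_coe_toNNReal C]
  rw [eLpNorm_congr_ae hzero, eLpNorm_zero]
  exact zero_le

theorem tendsto_Lp_finite_of_tendstoInMeasure_of_ae_norm_le [IsFiniteMeasure μ] (hp : 1 ≤ p)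
    (hp' : p ≠ ∞) {f : ℕ → α → E} {g : α → E} {C : ℝ}
    (hf : ∀ n, AEStronglyMeasurable (f n) μ) (hfC : ∀ n, ∀ᵐ x ∂μ, ‖f n x‖ ≤ C)
    (hfg : TendstoInMeasure μ f atTop g) :
    Tendsto (fun n => eLpNorm (f n - g) p μ) atTop (𝓝 0) := by
  have hg_top : eLpNorm g ∞ μ ≤ ENNReal.ofReal C :=
    eLpNorm_le_of_tendstoInMeasure (Eventually.of_forall fun n =>
      eLpNormEssSup_le_of_ae_bound (hfC n)) hfg hf
  have hg : MemLp g p μ :=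
    MemLp.mono_exponent ⟨hfg.aestronglyMeasurable hf, hg_top.trans_lt ENNReal.ofReal_lt_top⟩
      le_top
  exact tendsto_Lp_finite_of_tendstoInMeasure hp hp' hf hg
    (unifIntegrable_of_ae_norm_le hp hp' hf hfC) hfg

theorem tendsto_eLpNorm_sub_succ (hp : 1 ≤ p) {f : ℕ → α → E} {g : α → E}
    (hf : ∀ n, AEStronglyMeasurable (f n) μ) (hg : AEStronglyMeasurable g μ)
    (hfg : Tendsto (fun n => eLpNorm (f n - g) p μ) atTop (𝓝 0)) :
    Tendsto (fun n => eLpNorm (f (n + 1) - f n) p μ) atTop (𝓝 0) := by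
  have hsum : Tendsto (fun n => eLpNorm (f (n + 1) - g) p μ + eLpNorm (f n - g) p μ)
      atTop (𝓝 0) := by
    simpa using (hfg.comp (tendsto_add_atTop_nat 1)).add hfg
  refine tendsto_of_tendsto_of_tendsto_of_le_of_le tendsto_const_nhds hsum (fun _ => zero_le)
    fun n => ?_
  rw [← sub_sub_sub_cancel_right (f (n + 1)) (f n) g]
  exact eLpNorm_sub_le ((hf _).sub hg) ((hf _).sub hg) hp

variable [NormedSpace ℝ E] [CompleteSpace E]

theorem tendstoInMeasure_condExp_of_tendsto_eLpNorm (hp : 1 ≤ p) {l : Filter ι}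
    {m : ι → MeasurableSpace α} {f : ι → α → E}
    (hf : Tendsto (fun i => eLpNorm (f i) p μ) l (𝓝 0)) :
    TendstoInMeasure μ (fun i => μ[f i | m i]) l 0 := by
  refine tendstoInMeasure_of_tendsto_eLpNorm (zero_lt_one.trans_le hp).ne'
    (fun i => integrable_condExp.aestronglyMeasurable) aestronglyMeasurable_zero ?_
  simp only [sub_zero]
  exact tendsto_of_tendsto_of_tendsto_of_le_of_le tendsto_const_nhds hf (fun _ => zero_le)
    fun i => eLpNorm_condExp_le_eLpNorm (f i) hp

theorem condExp_sub_ae_eq_condExp_sub_condExp [IsFiniteMeasure μ] {m₁ m₂ : MeasurableSpace α}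
    (hm₁₂ : m₁ ≤ m₂) (hm₂ : m₂ ≤ m₀) {Y Z : α → E} (hY : Integrable Y μ) (hZ : Integrable Z μ) :
    μ[Z - Y | m₁] =ᵐ[μ] μ[μ[Z | m₂] - μ[Y | m₁] | m₁] := by
  have hm₁ : m₁ ≤ m₀ := hm₁₂.trans hm₂
  calc μ[Z - Y | m₁] =ᵐ[μ] μ[Z | m₁] - μ[Y | m₁] := condExp_sub hZ hY m₁
    _ =ᵐ[μ] μ[μ[Z | m₂] | m₁] - μ[μ[Y | m₁] | m₁] :=
      (condExp_condExp_of_le hm₁₂ hm₂).symm.sub (condExp_condExp_of_le le_rfl hm₁).symm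
    _ =ᵐ[μ] μ[μ[Z | m₂] - μ[Y | m₁] | m₁] :=
      (condExp_sub integrable_condExp integrable_condExp m₁).symm

theorem tendstoInMeasure_condExp_sub_succ [IsFiniteMeasure μ] (ℱ : Filtration ℕ m₀)
    {Y : ℕ → α → E} (hY : ∀ n, Integrable (Y n) μ) {g : α → E}
    (hL1 : Tendsto (fun n => eLpNorm (μ[Y n | ℱ n] - g) 1 μ) atTop (𝓝 0))
    (hg : AEStronglyMeasurable g μ) :
    TendstoInMeasure μ (fun n => μ[Y (n + 1) - Y n | ℱ n]) atTop 0 := by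
  refine TendstoInMeasure.congr_left (fun n => (condExp_sub_ae_eq_condExp_sub_condExp
    (ℱ.mono n.le_succ) (ℱ.le (n + 1)) (hY n) (hY (n + 1))).symm) ?_
  exact tendstoInMeasure_condExp_of_tendsto_eLpNorm le_rfl
    (f := fun n => μ[Y (n + 1) | ℱ (n + 1)] - μ[Y n | ℱ n]) <|
    tendsto_eLpNorm_sub_succ le_rfl (f := fun n => μ[Y n | ℱ n])
      (fun n => integrable_condExp.aestronglyMeasurable) hg hL1

end LpConvergence

section NaturalFiltration

variable [MeasurableSpace S] {X : ℕ → Ω → S}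

theorem filt_mono (X : ℕ → Ω → S) : Monotone (Filt X) := fun _ _ hmn =>
  biSup_mono fun _ hi => Finset.mem_range.2 ((Finset.mem_range.1 hi).trans_le hmn)

variable [MeasurableSpace Ω]

theorem filt_le (hX : ∀ i, Measurable (X i)) (n : ℕ) : Filt X n ≤ ‹MeasurableSpace Ω› :=
  iSup₂_le fun i _ => (hX i).comap_le

def Filt.filtration (hX : ∀ i, Measurable (X i)) : Filtration ℕ ‹MeasurableSpace Ω› :=
  ⟨Filt X, filt_mono X, filt_le hX⟩

end NaturalFiltration

theorem stmt17_general [MeasurableSpace Ω]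
    [MeasurableSpace S]
    (P : Measure Ω) [IsProbabilityMeasure P]
    (X : ℕ → Ω → S) (hX : ∀ i, Measurable (X i))
    (hconv : (∀ f : S → ℝ, Measurable f → (∃ C, ∀ x, |f x| ≤ C) →
      ∃ l : Ω → ℝ, TendstoInMeasure P (fun n => predMean P X f n) atTop l)) :
    ∀ f : S → ℝ, Measurable f → (∃ C, ∀ x, |f x| ≤ C) →
      TendstoInMeasure P
        (fun n => P[(fun ω => f (X (n + 1) ω) - f (X n ω)) | Filt X n]) atTop
        (fun _ => 0) := by
  intro f hf ⟨C, hC⟩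
  obtain ⟨l, hl⟩ := hconv f hf ⟨C, hC⟩
  have hfX : ∀ n, Integrable (fun ω => f (X n ω)) P := fun n =>
    .of_bound (hf.comp (hX n)).aestronglyMeasurable C (ae_of_all _ fun ω => hC (X n ω))
  have hpred_bound : ∀ n, ∀ᵐ ω ∂P, ‖predMean P X f n ω‖ ≤ C := fun n =>
    ae_bdd_abs_condExp_of_ae_bdd_abs (ae_of_all _ fun ω => hC (X n ω))
  have hpred_meas : ∀ n, AEStronglyMeasurable (predMean P X f n) P := fun n =>
    integrable_condExp.aestronglyMeasurable
  have hL1 : Tendsto (fun n => eLpNorm (predMean P X f n - l) 1 P) atTop (𝓝 0) :=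
    tendsto_Lp_finite_of_tendstoInMeasure_of_ae_norm_le le_rfl ENNReal.one_ne_top hpred_meas
      hpred_bound hl
  exact tendstoInMeasure_condExp_sub_succ (Y := fun n ω => f (X n ω)) (Filt.filtration hX) hfX
    hL1 (hl.aestronglyMeasurable hpred_meas)

/-- necessity of condition (7): if `α_n(f)` converges in probability for
each bounded Borel `f`, then `E[f(X_{n+2}) − f(X_{n+1}) ∣ 𝓕_n] → 0` in probability for each
bounded Borel `f`. -/
theorem stmt17 [MeasurableSpace Ω]
    [TopologicalSpace S] [PolishSpace S] [MeasurableSpace S] [BorelSpace S]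
    (P : Measure Ω) [IsProbabilityMeasure P]
    (X : ℕ → Ω → S) (hX : ∀ i, Measurable (X i))
    (hconv : (∀ f : S → ℝ, Measurable f → (∃ C, ∀ x, |f x| ≤ C) →
      ∃ l : Ω → ℝ, TendstoInMeasure P (fun n => predMean P X f n) atTop l)) :
    ∀ f : S → ℝ, Measurable f → (∃ C, ∀ x, |f x| ≤ C) →
      TendstoInMeasure P
        (fun n => P[(fun ω => f (X (n + 1) ω) - f (X n ω)) | Filt X n]) atTop
        (fun _ => 0) :=
  stmt17_general P X hX hconv
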